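/- arXiv:2103.15790 — 3 statements merged into one kernel-verified Lean document; each statement's English description precedes it below -/
import Mathlib

section
/- Let (Ω, F, P) be a probability space and 𝒳 = L∞(Ω, F, P). A risk measure ρ : 𝒳 → ℝ is star-shaped if and only if there exist a nonempty collection Γ and, for each γ ∈ Γ, a function α_γ : 𝒫 → [0, ∞] with inf_{Q∈𝒫} α_γ(Q) = 0, such that for every X ∈ 𝒳, ρ(X) = min_{γ∈Γ} sup_{Q∈𝒫} { E_Q[X] − α_γ(Q) }, where the minimum over γ is attained and 𝒫 denotes the set of all (countably additive) probability measures on (Ω, F) absolutely continuous with respect to P. -/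
open MeasureTheory

variable {Ω : Type*}

/-- The constant function, as an element of `L∞`. -/
noncomputable def Lconst [MeasurableSpace Ω] (P : Measure Ω) [IsProbabilityMeasure P]
    (m : ℝ) : Lp ℝ ⊤ P :=
  (memLp_const m).toLp (fun _ => m)

def IsRiskMeasure [MeasurableSpace Ω] (P : Measure Ω) [IsProbabilityMeasure P]
    (ρ : Lp ℝ ⊤ P → ℝ) : Prop :=
  (∀ X Y : Lp ℝ ⊤ P, Y ≤ X → ρ Y ≤ ρ X) ∧
  (∀ (X : Lp ℝ ⊤ P) (m : ℝ), ρ (X - Lconst P m) = ρ X - m) ∧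
  ρ 0 = 0

def IsStarShaped [MeasurableSpace Ω] (P : Measure Ω) [IsProbabilityMeasure P]
    (ρ : Lp ℝ ⊤ P → ℝ) : Prop :=
  ∀ (X : Lp ℝ ⊤ P) (l : ℝ), 1 < l → l * ρ X ≤ ρ (l • X)

/-!
For a star-shaped `ρ`, every `X₀` yields the penalty `α_{X₀}(Q) = (E_Q[X₀] - ρ(X₀))⁺`, whose
penalized supremum `sup_Q min (E_Q[X], E_Q[X - X₀] + ρ(X₀))` equals `ρ` at `X = X₀`. It also
dominates `ρ` everywhere, by a two-dimensional minimax argument: if it stayed below some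
`a < ρ(X)`, separating the convex set `{(E_Q[X], E_Q[X - X₀]) : Q}` from a quadrant would give
`t ∈ [0, 1]` with `X - t X₀ ≤ a - t ρ(X₀)` almost surely, and star-shapedness in the form
`ρ(t X₀) ≤ t ρ(X₀)` would force `ρ(X) ≤ a`. Conversely, since penalties are nonnegative each
penalized supremum is star-shaped, and a pointwise minimum of star-shaped maps is star-shaped.
-/

open Set

open scoped ENNReal

theorem nonpos_of_forall_pos_add_mul_lt {c β u : ℝ} (h : ∀ x : ℝ, 0 < x → c + x * β < u) :
    β ≤ 0 := by
  by_contra! hβ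
  have := h ((|u - c| + 1) / β) (by positivity)
  rw [div_mul_cancel₀ _ hβ.ne'] at this
  linarith [le_abs_self (u - c)]

theorem nonpos_nonpos_le_of_forall_pos_lt {a b β₁ β₂ u : ℝ}
    (h : ∀ x y : ℝ, 0 < x → 0 < y → (a + x) * β₁ + (b + y) * β₂ < u) :
    β₁ ≤ 0 ∧ β₂ ≤ 0 ∧ a * β₁ + b * β₂ ≤ u := by
  refine ⟨nonpos_of_forall_pos_add_mul_lt (c := a * β₁ + (b + 1) * β₂) (u := u)
    fun x hx => by linarith [h x 1 hx one_pos],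
    nonpos_of_forall_pos_add_mul_lt (c := (a + 1) * β₁ + b * β₂) (u := u)
    fun y hy => by linarith [h 1 y one_pos hy], ?_⟩
  have hcont : Continuous fun x : ℝ => (a + x) * β₁ + (b + x) * β₂ := by fun_prop
  exact le_of_tendsto (tendsto_nhdsWithin_of_tendsto_nhds (hcont.tendsto' 0 _ (by simp)))
    (eventually_nhdsWithin_of_forall (s := Ioi 0) fun x hx => (h x x hx hx).le)

theorem exists_convexComb_le_of_forall_le_or_le {C : Set (ℝ × ℝ)} (hC : Convex ℝ C) {a b : ℝ}
    (h : ∀ p ∈ C, p.1 ≤ a ∨ p.2 ≤ b) :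
    ∃ t ∈ Icc (0 : ℝ) 1, ∀ p ∈ C, (1 - t) * p.1 + t * p.2 ≤ (1 - t) * a + t * b := by
  rcases C.eq_empty_or_nonempty with rfl | ⟨c, hc⟩
  · exact ⟨0, by simp, by simp⟩
  have hdisj : Disjoint (Ioi a ×ˢ Ioi b) C := by
    refine Set.disjoint_left.2 fun p ⟨hp₁, hp₂⟩ hpC => ?_
    rcases h p hpC with h₁ | h₂
    exacts [not_le.2 hp₁ h₁, not_le.2 hp₂ h₂]
  obtain ⟨f, u, hfS, hfC⟩ := geometric_hahn_banach_open ((convex_Ioi a).prod (convex_Ioi b))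
    (isOpen_Ioi.prod isOpen_Ioi) hC hdisj
  obtain ⟨β₁, β₂, hf⟩ : ∃ β₁ β₂ : ℝ, ∀ p : ℝ × ℝ, f p = p.1 * β₁ + p.2 * β₂ := by
    refine ⟨f (1, 0), f (0, 1), fun p => ?_⟩
    conv_lhs => rw [show p = p.1 • ((1 : ℝ), (0 : ℝ)) + p.2 • ((0 : ℝ), (1 : ℝ)) by ext <;> simp]
    simp only [map_add, map_smul, smul_eq_mul]
  simp only [hf] at hfS hfC
  have hS : ∀ x y : ℝ, 0 < x → 0 < y → (a + x) * β₁ + (b + y) * β₂ < u := fun x y hx hy =>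
    hfS (a + x, b + y) ⟨by simpa using hx, by simpa using hy⟩
  obtain ⟨hβ₁, hβ₂, hab⟩ := nonpos_nonpos_le_of_forall_pos_lt hS
  have hσ : β₁ + β₂ < 0 := by
    refine lt_of_le_of_ne (by linarith) fun hσ => ?_
    have h₁ := hS 1 1 one_pos one_pos
    have h₂ := hfC c hc
    obtain ⟨rfl, rfl⟩ : β₁ = 0 ∧ β₂ = 0 := ⟨by linarith, by linarith⟩
    simp only [mul_zero, add_zero] at h₁ h₂
    linarith
  set t := β₂ / (β₁ + β₂)
  have hcomb : ∀ x y : ℝ, (β₁ + β₂) * ((1 - t) * x + t * y) = x * β₁ + y * β₂ := by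
    intro x y
    have := hσ.ne
    simp only [t]
    field_simp
    ring
  refine ⟨t, ⟨div_nonneg_of_nonpos hβ₂ hσ.le, (div_le_one_of_neg hσ).2 (by linarith)⟩,
    fun p hp => (mul_le_mul_left_of_neg hσ).1 ?_⟩
  rw [hcomb, hcomb]
  linarith [hfC p hp]

theorem EReal.coe_sub_coe_ennreal_ofReal (x y : ℝ) :
    (x : EReal) - ENNReal.ofReal y = ((min x (x - y) : ℝ) : EReal) := by
  rw [EReal.coe_ennreal_ofReal, ← EReal.coe_sub, ← min_sub_sub_left, sub_zero, min_comm]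

section ACProbMeasure

variable [MeasurableSpace Ω] {P : Measure Ω}

abbrev ACProbMeasure (P : Measure Ω) := {Q : Measure Ω // IsProbabilityMeasure Q ∧ Q ≪ P}

instance (Q : ACProbMeasure P) : IsProbabilityMeasure (Q : Measure Ω) := Q.2.1

theorem Lp.integrable_of_absolutelyContinuous (X : Lp ℝ ⊤ P) {Q : Measure Ω} [IsFiniteMeasure Q]
    (hQ : Q ≪ P) : Integrable X Q := by
  refine MemLp.integrable le_top ⟨(Lp.aestronglyMeasurable X).mono_ac hQ, ?_⟩
  have hX : eLpNormEssSup X P < ∞ := eLpNorm_exponent_top (f := X) ▸ (Lp.memLp X).2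
  exact eLpNorm_exponent_top (f := X) ▸ (eLpNormEssSup_mono_measure _ hQ).trans_lt hX

namespace ACProbMeasure

noncomputable def expectation (Q : ACProbMeasure P) : Lp ℝ ⊤ P →ₗ[ℝ] ℝ where
  toFun X := ∫ ω, X ω ∂(Q : Measure Ω)
  map_add' X Y := by
    rw [integral_congr_ae (Q.2.2.ae_le (Lp.coeFn_add X Y)), Pi.add_def,
      integral_add (Lp.integrable_of_absolutelyContinuous X Q.2.2)
        (Lp.integrable_of_absolutelyContinuous Y Q.2.2)]
  map_smul' c X := by
    rw [integral_congr_ae (Q.2.2.ae_le (Lp.coeFn_smul c X)), Pi.smul_def]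
    exact integral_smul c _

@[simp]
theorem expectation_apply (Q : ACProbMeasure P) (X : Lp ℝ ⊤ P) :
    Q.expectation X = ∫ ω, X ω ∂(Q : Measure Ω) := rfl

theorem expectation_Lconst [IsProbabilityMeasure P] (Q : ACProbMeasure P) (c : ℝ) :
    Q.expectation (Lconst P c) = c := by
  rw [expectation_apply, Lconst, integral_congr_ae (Q.2.2.ae_le (memLp_const c).coeFn_toLp)]
  simp

theorem convex_range_expectation : Convex ℝ (range (expectation (P := P))) := by
  rintro _ ⟨Q₁, rfl⟩ _ ⟨Q₂, rfl⟩ a b ha hb hab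
  let M : Measure Ω := ENNReal.ofReal a • (Q₁ : Measure Ω) + ENNReal.ofReal b • (Q₂ : Measure Ω)
  have hM : IsProbabilityMeasure M := ⟨by simp [M, ← ENNReal.ofReal_add ha hb, hab]⟩
  refine ⟨⟨M, hM, (Q₁.2.2.smul_left _).add_left (Q₂.2.2.smul_left _)⟩, LinearMap.ext fun X => ?_⟩
  have hint (Q : ACProbMeasure P) (r : ℝ) : Integrable X (ENNReal.ofReal r • (Q : Measure Ω)) :=
    (Lp.integrable_of_absolutelyContinuous X Q.2.2).smul_measure ENNReal.ofReal_ne_top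
  simp only [expectation_apply, LinearMap.add_apply, LinearMap.smul_apply, smul_eq_mul, M]
  rw [integral_add_measure (hint Q₁ a) (hint Q₂ b), integral_smul_measure, integral_smul_measure,
    ENNReal.toReal_ofReal ha, ENNReal.toReal_ofReal hb, smul_eq_mul, smul_eq_mul]

end ACProbMeasure

theorem Lp.le_of_forall_expectation_le [IsFiniteMeasure P] {X Y : Lp ℝ ⊤ P}
    (h : ∀ Q : ACProbMeasure P, Q.expectation X ≤ Q.expectation Y) : X ≤ Y := by
  refine (Lp.coeFn_le X Y).1 <| ae_le_of_forall_setIntegral_le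
    (Lp.integrable_of_absolutelyContinuous X .rfl) (Lp.integrable_of_absolutelyContinuous Y .rfl)
    fun s _ _ => ?_
  rcases eq_or_ne (P s) 0 with hs | hs
  · simp [Measure.restrict_eq_zero.2 hs]
  have := h ⟨ProbabilityTheory.cond P s, ProbabilityTheory.cond_isProbabilityMeasure hs,
    ProbabilityTheory.cond_absolutelyContinuous⟩
  simp only [ACProbMeasure.expectation_apply, ProbabilityTheory.cond, integral_smul_measure,
    smul_eq_mul] at this
  exact le_of_mul_le_mul_left this (ENNReal.toReal_pos (ENNReal.inv_ne_zero.2 (measure_ne_top P s))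
    (ENNReal.inv_ne_top.2 hs))

noncomputable def penalizedSup (α : ACProbMeasure P → ℝ≥0∞) (X : Lp ℝ ⊤ P) : EReal :=
  ⨆ Q, (Q.expectation X : EReal) - α Q

theorem mul_le_of_le_penalizedSup (α : ACProbMeasure P → ℝ≥0∞) (X : Lp ℝ ⊤ P) {l r s : ℝ}
    (hl : 1 ≤ l) (hr : (r : EReal) ≤ penalizedSup α X) (hs : penalizedSup α (l • X) ≤ s) :
    l * r ≤ s := by
  have hl₀ : 0 < l := by linarith
  suffices penalizedSup α X ≤ ((s / l : ℝ) : EReal) by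
    rw [mul_comm, ← le_div_iff₀ hl₀]
    exact EReal.coe_le_coe_iff.1 (hr.trans this)
  refine iSup_le fun Q => ?_
  have hQ := (le_iSup _ Q).trans hs
  rw [map_smul, smul_eq_mul] at hQ
  rcases eq_or_ne (α Q) ⊤ with hα | hα
  · simp [hα]
  rw [← EReal.coe_ennreal_toReal hα, ← EReal.coe_sub] at hQ ⊢
  rw [EReal.coe_le_coe_iff, le_div_iff₀ hl₀] at *
  nlinarith [ENNReal.toReal_nonneg (a := α Q)]

noncomputable def starPenalty (ρ : Lp ℝ ⊤ P → ℝ) (X₀ : Lp ℝ ⊤ P) (Q : ACProbMeasure P) : ℝ≥0∞ :=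
  ENNReal.ofReal (Q.expectation X₀ - ρ X₀)

theorem coe_sub_starPenalty (ρ : Lp ℝ ⊤ P → ℝ) (X X₀ : Lp ℝ ⊤ P) (Q : ACProbMeasure P) :
    (Q.expectation X : EReal) - starPenalty ρ X₀ Q
      = ((min (Q.expectation X) (Q.expectation X - Q.expectation X₀ + ρ X₀) : ℝ) : EReal) := by
  rw [starPenalty, EReal.coe_sub_coe_ennreal_ofReal, sub_sub_eq_add_sub, add_sub_right_comm]

theorem penalizedSup_starPenalty_self_le (ρ : Lp ℝ ⊤ P → ℝ) (X : Lp ℝ ⊤ P) :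
    penalizedSup (starPenalty ρ X) X ≤ ρ X :=
  iSup_le fun Q => by
    rw [coe_sub_starPenalty, sub_self, zero_add]
    exact EReal.coe_le_coe_iff.2 (min_le_right _ _)

end ACProbMeasure

section RiskMeasure

variable [MeasurableSpace Ω] {P : Measure Ω} [IsProbabilityMeasure P] {ρ : Lp ℝ ⊤ P → ℝ}

namespace IsRiskMeasure

theorem map_add_Lconst (hρ : IsRiskMeasure P ρ) (X : Lp ℝ ⊤ P) (m : ℝ) :
    ρ (X + Lconst P m) = ρ X + m := by
  have := hρ.2.1 (X + Lconst P m) m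
  rw [add_sub_cancel_right] at this
  linarith

theorem map_Lconst (hρ : IsRiskMeasure P ρ) (m : ℝ) : ρ (Lconst P m) = m := by
  simpa [hρ.2.2] using hρ.map_add_Lconst 0 m

theorem iInf_starPenalty_eq_zero (hρ : IsRiskMeasure P ρ) (X₀ : Lp ℝ ⊤ P) :
    ⨅ Q, starPenalty ρ X₀ Q = 0 := by
  refine le_antisymm (ENNReal.le_of_forall_pos_le_add fun ε hε _ => ?_) bot_le
  obtain ⟨Q, hQ⟩ : ∃ Q : ACProbMeasure P, Q.expectation X₀ ≤ ρ X₀ + ε := by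
    by_contra! h
    have hle : Lconst P (ρ X₀ + ε) ≤ X₀ := Lp.le_of_forall_expectation_le fun Q => by
      rw [Q.expectation_Lconst]
      exact (h Q).le
    have := hρ.1 _ _ hle
    rw [hρ.map_Lconst] at this
    linarith [NNReal.coe_pos.2 hε]
  refine (iInf_le _ Q).trans ?_
  rw [zero_add, starPenalty, ← ENNReal.ofReal_coe_nnreal]
  exact ENNReal.ofReal_le_ofReal (by linarith)

end IsRiskMeasure

namespace IsStarShaped

theorem map_smul_le (hss : IsStarShaped P ρ) (h0 : ρ 0 = 0) (X : Lp ℝ ⊤ P) {t : ℝ} (ht₀ : 0 ≤ t)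
    (ht₁ : t ≤ 1) : ρ (t • X) ≤ t * ρ X := by
  rcases ht₀.eq_or_lt with rfl | ht₀
  · simp [h0]
  rcases ht₁.eq_or_lt with rfl | ht₁
  · simp
  have := hss (t • X) t⁻¹ (one_lt_inv₀ ht₀ |>.2 ht₁)
  rw [smul_smul, inv_mul_cancel₀ ht₀.ne', one_smul] at this
  rwa [inv_mul_le_iff₀ ht₀] at this

theorem le_add_mul_of_sub_smul_le (hss : IsStarShaped P ρ) (hρ : IsRiskMeasure P ρ)
    {X X₀ : Lp ℝ ⊤ P} {t c : ℝ} (ht₀ : 0 ≤ t) (ht₁ : t ≤ 1) (h : X - t • X₀ ≤ Lconst P c) :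
    ρ X ≤ c + t * ρ X₀ :=
  calc ρ X ≤ ρ (t • X₀ + Lconst P c) := hρ.1 _ _ (sub_le_iff_le_add'.1 h)
    _ = ρ (t • X₀) + c := hρ.map_add_Lconst _ c
    _ ≤ c + t * ρ X₀ := by linarith [hss.map_smul_le hρ.2.2 X₀ ht₀ ht₁]

theorem exists_le_min_expectation (hss : IsStarShaped P ρ) (hρ : IsRiskMeasure P ρ)
    (X X₀ : Lp ℝ ⊤ P) {a : ℝ} (ha : a < ρ X) : ∃ Q : ACProbMeasure P,
      a ≤ min (Q.expectation X) (Q.expectation X - Q.expectation X₀ + ρ X₀) := by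
  by_contra! h
  let Φ : (Lp ℝ ⊤ P →ₗ[ℝ] ℝ) →ₗ[ℝ] ℝ × ℝ :=
    (LinearMap.applyₗ X).prod (LinearMap.applyₗ (X - X₀))
  have hΦ (Q : ACProbMeasure P) :
      Φ Q.expectation = (Q.expectation X, Q.expectation X - Q.expectation X₀) := by
    simp [Φ]
  obtain ⟨t, ⟨ht₀, ht₁⟩, ht⟩ := exists_convexComb_le_of_forall_le_or_le
    (ACProbMeasure.convex_range_expectation.linear_image Φ) (a := a) (b := a - ρ X₀) <| by
      rintro _ ⟨_, ⟨Q, rfl⟩, rfl⟩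
      rw [hΦ]
      rcases min_lt_iff.1 (h Q) with h₁ | h₂
      exacts [Or.inl h₁.le, Or.inr (by linarith)]
  have hle : X - t • X₀ ≤ Lconst P (a - t * ρ X₀) := Lp.le_of_forall_expectation_le fun Q => by
    have := ht _ ⟨_, ⟨Q, rfl⟩, rfl⟩
    rw [hΦ] at this
    rw [map_sub, map_smul, Q.expectation_Lconst, smul_eq_mul]
    linarith
  linarith [hss.le_add_mul_of_sub_smul_le hρ ht₀ ht₁ hle]

theorem le_penalizedSup_starPenalty (hss : IsStarShaped P ρ) (hρ : IsRiskMeasure P ρ)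
    (X X₀ : Lp ℝ ⊤ P) : (ρ X : EReal) ≤ penalizedSup (starPenalty ρ X₀) X := by
  refine EReal.ge_of_forall_gt_iff_ge.1 fun a ha => ?_
  obtain ⟨Q, hQ⟩ := hss.exists_le_min_expectation hρ X X₀ (EReal.coe_lt_coe_iff.1 ha)
  refine le_iSup_of_le Q ?_
  rw [coe_sub_starPenalty]
  exact EReal.coe_le_coe_iff.2 hQ

end IsStarShaped

end RiskMeasure

theorem star_shaped_iff_robust_representation
    [MeasurableSpace Ω] (P : Measure Ω) [IsProbabilityMeasure P]
    (ρ : Lp ℝ ⊤ P → ℝ) (hρ : IsRiskMeasure P ρ) :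
    IsStarShaped P ρ ↔
      ∃ Γ : Set ({Q : Measure Ω // IsProbabilityMeasure Q ∧ Q ≪ P} → ENNReal),
        Γ.Nonempty ∧
        (∀ α ∈ Γ, (⨅ Q, α Q) = 0) ∧
        (∀ X : Lp ℝ ⊤ P,
          IsLeast
            {y : EReal | ∃ α ∈ Γ,
              y = ⨆ Q : {Q : Measure Ω // IsProbabilityMeasure Q ∧ Q ≪ P},
                    ((∫ ω, X ω ∂(Q : Measure Ω) : ℝ) : EReal) - (α Q : EReal)}
            ((ρ X : ℝ) : EReal)) := by
  constructor
  · intro hss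
    refine ⟨range (starPenalty ρ), range_nonempty _, ?_, fun X => ⟨⟨_, ⟨X, rfl⟩, ?_⟩, ?_⟩⟩
    · rintro _ ⟨X₀, rfl⟩
      exact hρ.iInf_starPenalty_eq_zero X₀
    · exact le_antisymm (hss.le_penalizedSup_starPenalty hρ X X)
        (penalizedSup_starPenalty_self_le ρ X)
    · rintro _ ⟨_, ⟨X₀, rfl⟩, rfl⟩
      exact hss.le_penalizedSup_starPenalty hρ X X₀
  · rintro ⟨Γ, -, -, hrep⟩ X l hl
    obtain ⟨⟨α, hα, hval⟩, -⟩ := hrep (l • X)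
    exact mul_le_of_le_penalizedSup α X hl.le ((hrep X).2 ⟨α, hα, rfl⟩) hval.ge
end

section
/- Let (Ω, F, P) be a probability space, ρ : L∞(Ω, F, P) → ℝ a star-shaped risk measure, and Y ∈ L∞. Then the set 𝒜_Y = { Z ∈ L∞ : Z ≤ α(Y − ρ(Y)) P-a.s. for some α ∈ [0,1] } is Fatou closed: if (X_n) is a uniformly bounded sequence in 𝒜_Y converging P-almost surely to X, then X ∈ 𝒜_Y. -/
/-! Choosing for each `X n` a scale `α n ∈ [0, 1]`, compactness of `[0, 1]` gives a subsequence
along which `α n → α`; passing to the a.e. limit in `X n ≤ α n • (Y - ρ(Y))` along it gives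
`X ≤ α • (Y - ρ(Y))`. -/

open MeasureTheory Filter

variable {Ω : Type*}

namespace MeasureTheory.Lp

variable [MeasurableSpace Ω] {μ : Measure Ω} {p : ENNReal}

theorem le_of_ae_tendsto {f g : ℕ → Lp ℝ p μ} {F G : Lp ℝ p μ} (hfg : ∀ n, f n ≤ g n)
    (hf : ∀ᵐ ω ∂μ, Tendsto (fun n => f n ω) atTop (nhds (F ω)))
    (hg : ∀ᵐ ω ∂μ, Tendsto (fun n => g n ω) atTop (nhds (G ω))) : F ≤ G := by
  have hfg_ae : ∀ᵐ ω ∂μ, ∀ n, f n ω ≤ g n ω :=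
    ae_all_iff.mpr fun n => (coeFn_le _ _).mpr (hfg n)
  rw [← coeFn_le]
  filter_upwards [hfg_ae, hf, hg] with ω hω hfω hgω
  exact le_of_tendsto_of_tendsto' hfω hgω hω

theorem ae_tendsto_smul {c : ℕ → ℝ} {a : ℝ} (hc : Tendsto c atTop (nhds a)) (W : Lp ℝ p μ) :
    ∀ᵐ ω ∂μ, Tendsto (fun n => (c n • W) ω) atTop (nhds ((a • W) ω)) := by
  filter_upwards [ae_all_iff.mpr fun n => coeFn_smul (c n) W, coeFn_smul a W]
    with ω hcω haω
  simp only [hcω, haω, Pi.smul_apply, smul_eq_mul]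
  exact hc.mul_const _

theorem exists_le_smul_of_ae_tendsto {K : Set ℝ} (hK : IsCompact K) (W : Lp ℝ p μ)
    {f : ℕ → Lp ℝ p μ} {F : Lp ℝ p μ} (hf : ∀ n, ∃ α ∈ K, f n ≤ α • W)
    (hF : ∀ᵐ ω ∂μ, Tendsto (fun n => f n ω) atTop (nhds (F ω))) :
    ∃ α ∈ K, F ≤ α • W := by
  choose c hcK hle using hf
  obtain ⟨α, hαK, φ, hφ, hcφ⟩ := hK.tendsto_subseq hcK
  have hFφ : ∀ᵐ ω ∂μ, Tendsto (fun n => f (φ n) ω) atTop (nhds (F ω)) := by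
    filter_upwards [hF] with ω hω using hω.comp hφ.tendsto_atTop
  exact ⟨α, hαK, le_of_ae_tendsto (fun n => hle (φ n)) hFφ (ae_tendsto_smul hcφ W)⟩

end MeasureTheory.Lp

theorem fatou_closedness_of_AY_general
    [MeasurableSpace Ω] (P : Measure Ω) [IsProbabilityMeasure P]
    (ρ : Lp ℝ ⊤ P → ℝ)
    (Y : Lp ℝ ⊤ P)
    (Xs : ℕ → Lp ℝ ⊤ P) (X : Lp ℝ ⊤ P)
    -- each `X n` lies in `𝒜_Y`
    (hmem : ∀ n, ∃ α ∈ Set.Icc (0 : ℝ) 1, Xs n ≤ α • (Y - Lconst P (ρ Y)))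
    -- `P`-almost sure convergence to `X`
    (hconv : ∀ᵐ ω ∂P, Tendsto (fun n => Xs n ω) atTop (nhds (X ω))) :
    ∃ α ∈ Set.Icc (0 : ℝ) 1, X ≤ α • (Y - Lconst P (ρ Y)) :=
  Lp.exists_le_smul_of_ae_tendsto isCompact_Icc _ hmem hconv

theorem fatou_closedness_of_AY
    [MeasurableSpace Ω] (P : Measure Ω) [IsProbabilityMeasure P]
    (ρ : Lp ℝ ⊤ P → ℝ) (hρ : IsRiskMeasure P ρ) (hss : IsStarShaped P ρ)
    (Y : Lp ℝ ⊤ P)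
    (Xs : ℕ → Lp ℝ ⊤ P) (X : Lp ℝ ⊤ P)
    -- each `X n` lies in `𝒜_Y`
    (hmem : ∀ n, ∃ α ∈ Set.Icc (0 : ℝ) 1, Xs n ≤ α • (Y - Lconst P (ρ Y)))
    -- uniform boundedness
    (hbdd : ∃ C : ℝ, ∀ n, ∀ᵐ ω ∂P, |Xs n ω| ≤ C)
    -- `P`-almost sure convergence to `X`
    (hconv : ∀ᵐ ω ∂P, Tendsto (fun n => Xs n ω) atTop (nhds (X ω))) :
    ∃ α ∈ Set.Icc (0 : ℝ) 1, X ≤ α • (Y - Lconst P (ρ Y)) :=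
  fatou_closedness_of_AY_general P ρ Y Xs X hmem hconv
end

section
/- Let (Ω, F, P) be an atomless probability space, 𝒳 = L∞(Ω, F, P), and α ∈ (0,1). Then ES_α is the smallest SSD-consistent risk measure dominating VaR_α: (a) ES_α is an SSD-consistent risk measure with ES_α(X) ≥ VaR_α(X) for all X ∈ 𝒳, and (b) every SSD-consistent risk measure ρ : 𝒳 → ℝ satisfying ρ(X) ≥ VaR_α(X) for all X ∈ 𝒳 also satisfies ρ(X) ≥ ES_α(X) for all X ∈ 𝒳. -/
open MeasureTheory

variable {Ω : Type*}

/-- An atomless measure. -/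
def Atomless [MeasurableSpace Ω] (P : Measure Ω) : Prop :=
  ∀ A : Set Ω, MeasurableSet A → 0 < P A →
    ∃ B : Set Ω, MeasurableSet B ∧ B ⊆ A ∧ 0 < P B ∧ P B < P A

/-- Value-at-Risk at level `α`. -/
noncomputable def VaR [MeasurableSpace Ω] (P : Measure Ω) (α : ℝ) (X : Ω → ℝ) : ℝ :=
  sInf {x : ℝ | P {ω | x < X ω} ≤ ENNReal.ofReal (1 - α)}

/-- Expected Shortfall at level `α`. -/
noncomputable def ES [MeasurableSpace Ω] (P : Measure Ω) (α : ℝ) (X : Ω → ℝ) : ℝ :=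
  (1 - α)⁻¹ * ∫ t in α..1, VaR P t X

/-- `X` second-order stochastically dominates `Y` (losses convention):
`E[u(−X)] ≥ E[u(−Y)]` for every increasing concave `u`. -/
def SSDDominates [MeasurableSpace Ω] (P : Measure Ω) (X Y : Ω → ℝ) : Prop :=
  ∀ u : ℝ → ℝ, Monotone u → ConcaveOn ℝ Set.univ u →
    ∫ ω, u (-(Y ω)) ∂P ≤ ∫ ω, u (-(X ω)) ∂P

def SSDConsistent [MeasurableSpace Ω] (P : Measure Ω) [IsProbabilityMeasure P]
    (ρ : Lp ℝ ⊤ P → ℝ) : Prop :=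
  ∀ X Y : Lp ℝ ⊤ P, SSDDominates P X Y → ρ X ≤ ρ Y

open Set
open scoped ENNReal

namespace ESAux

variable {Ω : Type*} [MeasurableSpace Ω] {P : Measure Ω} [IsProbabilityMeasure P]

/-- survival function -/
noncomputable def S (P : Measure Ω) (g : Ω → ℝ) (x : ℝ) : ℝ≥0∞ := P {ω | x < g ω}

noncomputable def V (P : Measure Ω) (t : ℝ) (g : Ω → ℝ) : ℝ :=
  sInf {x : ℝ | S P g x ≤ ENNReal.ofReal (1 - t)}

lemma S_anti {g : Ω → ℝ} : Antitone (S P g) := fun x y hxy =>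
  measure_mono fun ω hω => lt_of_le_of_lt hxy hω

lemma S_le_one {g : Ω → ℝ} (x : ℝ) : S P g x ≤ 1 := prob_le_one

lemma S_ne_top {g : Ω → ℝ} (x : ℝ) : S P g x ≠ ∞ := ((S_le_one x).trans_lt ENNReal.one_lt_top).ne

lemma S_congr {g g' : Ω → ℝ} (h : g =ᵐ[P] g') (x : ℝ) : S P g x = S P g' x := by
  refine measure_congr (h.mono fun ω hω => ?_)
  show (x < g ω) = (x < g' ω)
  rw [hω]

lemma V_congr {g g' : Ω → ℝ} (h : g =ᵐ[P] g') (t : ℝ) : V P t g = V P t g' := by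
  unfold V; congr 1; ext x; simp only [Set.mem_setOf_eq, S_congr h]

section bound

variable {g : Ω → ℝ} {C : ℝ} (hC : ∀ᵐ ω ∂P, |g ω| ≤ C)

include hC

lemma S_eq_zero_of_ge {x : ℝ} (hx : C ≤ x) : S P g x = 0 := by
  refine measure_mono_null (fun ω hω => ?_) (ae_iff.1 hC)
  simp only [Set.mem_setOf_eq, not_le] at hω ⊢
  exact lt_of_le_of_lt hx (hω.trans_le (le_abs_self _))

lemma S_eq_one_of_lt {x : ℝ} (hx : x < -C) : S P g x = 1 := by
  refine le_antisymm (S_le_one x) ?_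
  have h1 : P {ω | ¬ (x < g ω)} = 0 := by
    refine measure_mono_null (fun ω hω => ?_) (ae_iff.1 hC)
    simp only [Set.mem_setOf_eq, not_lt, not_le] at hω ⊢
    linarith [neg_abs_le (g ω)]
  calc (1:ℝ≥0∞) = P Set.univ := (measure_univ).symm
    _ ≤ P {ω | x < g ω} + P {ω | ¬ (x < g ω)} := by
        rw [← Set.compl_setOf]
        exact (measure_union_le _ _).trans' (measure_mono (by simp [Set.union_compl_self]))
    _ = P {ω | x < g ω} := by rw [h1, add_zero]

lemma exists_lb_Aset (ht : 0 < t) :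
    ∀ a ∈ {x : ℝ | S P g x ≤ ENNReal.ofReal (1 - t)}, -C ≤ a := by
  intro a ha
  by_contra hlt
  push_neg at hlt
  rw [Set.mem_setOf_eq, S_eq_one_of_lt hC hlt] at ha
  exact absurd (ha.trans_lt (ENNReal.ofReal_lt_one.2 (by linarith))) (lt_irrefl _)

lemma nonempty_Aset (t : ℝ) :
    Set.Nonempty {x : ℝ | S P g x ≤ ENNReal.ofReal (1 - t)} :=
  ⟨C, by simp [Set.mem_setOf_eq, S_eq_zero_of_ge hC le_rfl]⟩

lemma bddBelow_Aset (ht : 0 < t) :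
    BddBelow {x : ℝ | S P g x ≤ ENNReal.ofReal (1 - t)} :=
  ⟨-C, fun a ha => exists_lb_Aset hC ht a ha⟩

lemma V_le_of_mem {t x : ℝ} (hx : S P g x ≤ ENNReal.ofReal (1 - t)) (ht : 0 < t) :
    V P t g ≤ x := csInf_le (bddBelow_Aset hC ht) hx

lemma le_V_of_lb {t x : ℝ} (hx : ∀ a, S P g a ≤ ENNReal.ofReal (1 - t) → x ≤ a) :
    x ≤ V P t g := le_csInf (nonempty_Aset hC t) hx

lemma V_le_C (t : ℝ) (ht : 0 < t) : V P t g ≤ C :=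
  V_le_of_mem hC (by simp [S_eq_zero_of_ge hC le_rfl]) ht

lemma neg_C_le_V (t : ℝ) (ht : 0 < t) : -C ≤ V P t g :=
  le_V_of_lb hC fun a ha => exists_lb_Aset hC ht a ha

lemma abs_V_le (t : ℝ) (ht : 0 < t) : |V P t g| ≤ |C| := by
  rw [abs_le]
  constructor
  · exact (neg_le_neg (le_abs_self C)).trans (neg_C_le_V hC t ht)
  · exact (V_le_C hC t ht).trans (le_abs_self C)

lemma V_mono_t {t₁ t₂ : ℝ} (h1 : 0 < t₁) (h12 : t₁ ≤ t₂) : V P t₁ g ≤ V P t₂ g := by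
  refine csInf_le_csInf (bddBelow_Aset hC h1) (nonempty_Aset hC t₂) fun x hx => ?_
  exact hx.trans (ENNReal.ofReal_le_ofReal (by linarith))

lemma S_right_cont {x : ℝ} {r : ℝ≥0∞} (h : ∀ y, x < y → S P g y ≤ r) : S P g x ≤ r := by
  have hun : {ω | x < g ω} = ⋃ n : ℕ, {ω | x + 1/(n+1) < g ω} := by
    ext ω
    simp only [Set.mem_setOf_eq, Set.mem_iUnion]
    constructor
    · intro hω
      obtain ⟨n, hn⟩ := exists_nat_one_div_lt (sub_pos.2 hω)
      exact ⟨n, by push_cast; push_cast at hn; linarith⟩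
    · rintro ⟨n, hn⟩
      have : (0:ℝ) < 1/(n+1) := by positivity
      linarith
  have hmono : Monotone (fun n : ℕ => {ω | x + 1/(n+1) < g ω}) := by
    intro m n hmn ω hω
    simp only [Set.mem_setOf_eq] at *
    have h1 : (1:ℝ)/(n+1) ≤ 1/(m+1) := by
      apply one_div_le_one_div_of_le (by positivity)
      have := (Nat.cast_le (α := ℝ)).2 hmn
      linarith
    linarith
  rw [show S P g x = P {ω | x < g ω} from rfl, hun, hmono.measure_iUnion]
  refine iSup_le fun n => h _ (lt_add_of_pos_right x (by positivity))

lemma V_mem {t : ℝ} (ht : 0 < t) : S P g (V P t g) ≤ ENNReal.ofReal (1 - t) := by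
  refine S_right_cont hC fun y hy => ?_
  obtain ⟨a, ha, hay⟩ := (csInf_lt_iff (bddBelow_Aset hC ht) (nonempty_Aset hC t)).1 hy
  exact (S_anti hay.le).trans ha

lemma lt_V_iff {t x : ℝ} (ht : 0 < t) :
    x < V P t g ↔ ENNReal.ofReal (1 - t) < S P g x := by
  constructor
  · intro hx
    by_contra hle
    push_neg at hle
    exact absurd (V_le_of_mem hC hle ht) (not_le.2 hx)
  · intro hS
    rcases lt_or_ge x (V P t g) with h | h
    · exact h
    · exact absurd ((S_anti h).trans (V_mem hC ht)) (not_le.2 hS)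

omit hC in
lemma S_sub_const (c x : ℝ) : S P (fun ω => g ω - c) x = S P g (x + c) := by
  unfold S
  congr 1
  ext ω
  simp only [Set.mem_setOf_eq]
  exact lt_sub_iff_add_lt

lemma hC_sub_const (c : ℝ) : ∀ᵐ ω ∂P, |g ω - c| ≤ C + |c| := by
  filter_upwards [hC] with ω hω
  calc |g ω - c| ≤ |g ω| + |c| := abs_sub _ _
    _ ≤ C + |c| := by linarith

lemma V_sub_const {t : ℝ} (ht : 0 < t) (c : ℝ) :
    V P t (fun ω => g ω - c) = V P t g - c := by
  have hC' := hC_sub_const hC c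
  apply le_antisymm
  · have h1 : S P (fun ω => g ω - c) (V P t g - c) ≤ ENNReal.ofReal (1 - t) := by
      rw [S_sub_const, sub_add_cancel]
      exact V_mem hC ht
    exact V_le_of_mem hC' h1 ht
  · rw [sub_le_iff_le_add]
    have h2 := V_mem hC' ht
    rw [S_sub_const] at h2
    exact V_le_of_mem hC h2 ht

lemma V_mono_g {g' : Ω → ℝ} {C' : ℝ} (hC' : ∀ᵐ ω ∂P, |g' ω| ≤ C') {t : ℝ} (ht : 0 < t)
    (h : g ≤ᵐ[P] g') : V P t g ≤ V P t g' := by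
  refine csInf_le_csInf (bddBelow_Aset hC ht) (nonempty_Aset hC' t) fun x hx => ?_
  refine le_trans (measure_mono_ae (h.mono fun ω hω => fun hxg => lt_of_lt_of_le hxg hω)) hx

lemma V_intervalIntegrable {α : ℝ} (hα : 0 < α) (hα1 : α ≤ 1) :
    IntervalIntegrable (fun t => V P t g) MeasureTheory.volume α 1 := by
  apply MonotoneOn.intervalIntegrable
  rw [Set.uIcc_of_le hα1]
  intro t1 ht1 t2 _ h12
  exact V_mono_t hC (lt_of_lt_of_le hα ht1.1) h12

lemma V_le_ES {α : ℝ} (hα : 0 < α) (hα1 : α < 1) :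
    V P α g ≤ (1 - α)⁻¹ * ∫ t in α..1, V P t g := by
  have key : (1 - α) * V P α g ≤ ∫ t in α..1, V P t g := by
    have h1 : ∫ t in α..1, V P α g = (1 - α) * V P α g := by
      rw [intervalIntegral.integral_const, smul_eq_mul]
    rw [← h1]
    apply intervalIntegral.integral_mono_on hα1.le (intervalIntegrable_const)
      (V_intervalIntegrable hC hα hα1.le)
    intro t ht
    exact V_mono_t hC hα ht.1
  have h3 : (1-α)⁻¹ * ((1-α) * V P α g) ≤ (1-α)⁻¹ * ∫ t in α..1, V P t g :=
    mul_le_mul_of_nonneg_left key (inv_nonneg.2 (by linarith))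
  rwa [← mul_assoc, inv_mul_cancel₀ (by linarith), one_mul] at h3

section fubini

variable (hgm : Measurable g) {α : ℝ} (hα : 0 < α) (hα1 : α < 1)

/-- monotone extension of `t ↦ V P t g` -/
noncomputable def Phi (P : Measure Ω) (g : Ω → ℝ) (α : ℝ) : ℝ → ℝ := fun t => V P (max t α) g

omit hgm hα1 in
include hα in
lemma Phi_mono : Monotone (Phi P g α) := fun t1 t2 h =>
  V_mono_t hC (lt_of_lt_of_le hα (le_max_right _ _)) (max_le_max h le_rfl)

omit hgm hα1 in
include hα in
lemma Phi_measurable : Measurable (Phi P g α) := (Phi_mono hC hα).measurable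

omit hC hgm hα1 in
lemma Phi_eq {t : ℝ} (ht : α ≤ t) : Phi P g α t = V P t g := by
  unfold Phi; rw [max_eq_left ht]

omit hC hgm hα hα1 in
lemma inner_slice (v q : ℝ) :
    ∫⁻ x in Set.Ioi q, (if x < v then (1:ℝ≥0∞) else 0) = ENNReal.ofReal (max (v - q) 0) := by
  have : ∀ x : ℝ, (if x < v then (1:ℝ≥0∞) else 0) = (Set.Iio v).indicator (fun _ => 1) x := by
    intro x; simp [Set.indicator_apply, Set.mem_Iio]
  simp_rw [this]
  rw [lintegral_indicator measurableSet_Iio, Measure.restrict_restrict measurableSet_Iio]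
  have h2 : Set.Iio v ∩ Set.Ioi q = Set.Ioo q v := by ext x; simp [Set.mem_Ioo, and_comm]
  rw [h2, setLIntegral_one, Real.volume_Ioo]
  rcases le_or_gt v q with h | h
  · rw [max_eq_right (by linarith), ENNReal.ofReal_eq_zero.2 (by linarith), ENNReal.ofReal_zero]
  · rw [max_eq_left (by linarith)]

include hgm hα hα1 in
lemma key_fubini (q : ℝ) :
    ∫⁻ t in Set.Ioc α 1, ENNReal.ofReal (max (V P t g - q) 0)
      = ∫⁻ x in Set.Ioi q, min (S P g x) (ENNReal.ofReal (1 - α)) := by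
  have hPhiV : ∀ t ∈ Set.Ioc α 1, ENNReal.ofReal (max (V P t g - q) 0)
      = ENNReal.ofReal (max (Phi P g α t - q) 0) := by
    intro t ht; rw [Phi_eq ht.1.le]
  rw [setLIntegral_congr_fun measurableSet_Ioc hPhiV]
  have hstep : ∀ t : ℝ, ENNReal.ofReal (max (Phi P g α t - q) 0)
      = ∫⁻ x in Set.Ioi q, (if x < Phi P g α t then (1:ℝ≥0∞) else 0) := by
    intro t; rw [inner_slice]
  simp_rw [hstep]
  have hmeas : AEMeasurable (Function.uncurry fun t x => (if x < Phi P g α t then (1:ℝ≥0∞) else 0))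
      ((MeasureTheory.volume.restrict (Set.Ioc α 1)).prod
        (MeasureTheory.volume.restrict (Set.Ioi q))) := by
    have hU : MeasurableSet {p : ℝ × ℝ | p.2 < Phi P g α p.1} :=
      measurableSet_lt measurable_snd ((Phi_measurable hC hα).comp measurable_fst)
    have : (Function.uncurry fun t x => (if x < Phi P g α t then (1:ℝ≥0∞) else 0))
        = {p : ℝ × ℝ | p.2 < Phi P g α p.1}.indicator (fun _ => 1) := by
      ext p
      simp [Function.uncurry, Set.indicator_apply, Set.mem_setOf_eq]
    rw [this]
    exact ((measurable_const.indicator hU).aemeasurable)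
  rw [lintegral_lintegral_swap hmeas]
  refine setLIntegral_congr_fun measurableSet_Ioi (fun x hx => ?_)
  have hset : Set.Ioc α 1 ∩ {t : ℝ | x < Phi P g α t}
      = Set.Ioc (max α (1 - (S P g x).toReal)) 1 := by
    ext t
    simp only [Set.mem_inter_iff, Set.mem_Ioc, Set.mem_setOf_eq, max_lt_iff]
    constructor
    · rintro ⟨⟨ht1, ht2⟩, hlt⟩
      rw [Phi_eq ht1.le] at hlt
      have := (lt_V_iff hC (lt_trans hα ht1)).1 hlt
      have h3 : 1 - t < (S P g x).toReal :=
        (ENNReal.ofReal_lt_iff_lt_toReal (by linarith) (S_ne_top x)).1 this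
      exact ⟨⟨ht1, by linarith⟩, ht2⟩
    · rintro ⟨⟨ht1, ht3⟩, ht2⟩
      refine ⟨⟨ht1, ht2⟩, ?_⟩
      rw [Phi_eq ht1.le]
      refine (lt_V_iff hC (lt_trans hα ht1)).2 ?_
      exact (ENNReal.ofReal_lt_iff_lt_toReal (by linarith) (S_ne_top x)).2 (by linarith)
  have hindic : ∀ t : ℝ, (if x < Phi P g α t then (1:ℝ≥0∞) else 0)
      = ({t : ℝ | x < Phi P g α t}).indicator (fun _ => 1) t := by
    intro t; simp [Set.indicator_apply, Set.mem_setOf_eq]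
  simp_rw [hindic]
  rw [lintegral_indicator (measurableSet_lt measurable_const (Phi_measurable hC hα)),
    Measure.restrict_restrict (measurableSet_lt measurable_const (Phi_measurable hC hα)),
    Set.inter_comm, hset, setLIntegral_one, Real.volume_Ioc]
  have hrw : S P g x = ENNReal.ofReal (S P g x).toReal := (ENNReal.ofReal_toReal (S_ne_top x)).symm
  rcases le_total ((S P g x).toReal) (1 - α) with h | h
  · rw [max_eq_right (by linarith [ENNReal.toReal_nonneg (a := S P g x)]), min_eq_left]
    · rw [show (1:ℝ) - (1 - (S P g x).toReal) = (S P g x).toReal by ring]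
      exact ENNReal.ofReal_toReal (S_ne_top (P := P) (g := g) x)
    · rw [hrw]; exact ENNReal.ofReal_le_ofReal h
  · rw [max_eq_left (by linarith), min_eq_right]
    · rw [hrw]; exact ENNReal.ofReal_le_ofReal h

include hgm in
omit hα hα1 in
lemma expectation_posPart (q : ℝ) :
    ∫ ω, max (g ω - q) 0 ∂P = (∫⁻ x in Set.Ioi q, S P g x).toReal := by
  have hrepr := integral_eq_lintegral_of_nonneg_ae (μ := P) (f := fun ω => max (g ω - q) 0)
    (Filter.Eventually.of_forall fun ω => le_max_right _ _)
    ((hgm.sub measurable_const).max measurable_const).aestronglyMeasurable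
  rw [hrepr]
  congr 1
  have hstep : ∀ ω : Ω, ENNReal.ofReal (max (g ω - q) 0)
      = ∫⁻ x in Set.Ioi q, (if x < g ω then (1:ℝ≥0∞) else 0) := fun ω => (inner_slice (g ω) q).symm
  simp_rw [hstep]
  have hmeas : AEMeasurable (Function.uncurry fun ω x => (if x < g ω then (1:ℝ≥0∞) else 0))
      (P.prod (MeasureTheory.volume.restrict (Set.Ioi q))) := by
    have hU : MeasurableSet {p : Ω × ℝ | p.2 < g p.1} :=
      measurableSet_lt measurable_snd (hgm.comp measurable_fst)
    have huncurry : (Function.uncurry fun ω x => (if x < g ω then (1:ℝ≥0∞) else 0))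
        = {p : Ω × ℝ | p.2 < g p.1}.indicator (fun _ => 1) := by
      ext p
      simp [Function.uncurry, Set.indicator_apply, Set.mem_setOf_eq]
    rw [huncurry]
    exact (measurable_const.indicator hU).aemeasurable
  rw [lintegral_lintegral_swap hmeas]
  refine setLIntegral_congr_fun measurableSet_Ioi (fun x _ => ?_)
  have hindic : ∀ ω : Ω, (if x < g ω then (1:ℝ≥0∞) else 0)
      = ({ω : Ω | x < g ω}).indicator (fun _ => 1) ω := by
    intro ω; simp [Set.indicator_apply, Set.mem_setOf_eq]
  simp_rw [hindic]
  rw [lintegral_indicator (measurableSet_lt measurable_const hgm), setLIntegral_one]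
  rfl

omit hgm hα hα1 in
lemma lint_S_lt_top (q : ℝ) : ∫⁻ x in Set.Ioi q, S P g x < ⊤ := by
  have hb : ∀ x ∈ Set.Ioi q, S P g x ≤ (Set.Ioc q C).indicator (fun _ => (1:ℝ≥0∞)) x := by
    intro x hx
    rcases le_or_gt x C with h | h
    · rw [Set.indicator_of_mem (Set.mem_Ioc.2 ⟨Set.mem_Ioi.1 hx, h⟩)]
      exact S_le_one x
    · rw [S_eq_zero_of_ge hC h.le]
      exact zero_le
  calc ∫⁻ x in Set.Ioi q, S P g x
      ≤ ∫⁻ x in Set.Ioi q, (Set.Ioc q C).indicator (fun _ => (1:ℝ≥0∞)) x :=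
        setLIntegral_mono (measurable_const.indicator measurableSet_Ioc) hb
    _ ≤ ∫⁻ x, (Set.Ioc q C).indicator (fun _ => (1:ℝ≥0∞)) x := setLIntegral_le_lintegral _ _
    _ = MeasureTheory.volume (Set.Ioc q C) := by
        rw [lintegral_indicator measurableSet_Ioc, setLIntegral_one]
    _ < ⊤ := by rw [Real.volume_Ioc]; exact ENNReal.ofReal_lt_top

include hα in
omit hgm in
lemma maxV_intervalIntegrable (hα1 : α ≤ 1) (q : ℝ) :
    IntervalIntegrable (fun t => max (V P t g - q) 0) MeasureTheory.volume α 1 := by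
  apply MonotoneOn.intervalIntegrable
  rw [Set.uIcc_of_le hα1]
  intro t1 ht1 t2 _ h12
  exact max_le_max (sub_le_sub_right (V_mono_t hC (lt_of_lt_of_le hα ht1.1) h12) q) le_rfl

include hα hα1 in
omit hgm in
lemma intervalIntegral_max_eq (q : ℝ) :
    ∫ t in α..1, max (V P t g - q) 0
      = (∫⁻ t in Set.Ioc α 1, ENNReal.ofReal (max (V P t g - q) 0)).toReal := by
  rw [intervalIntegral.integral_of_le hα1.le]
  have hrepr := integral_eq_lintegral_of_nonneg_ae
    (μ := MeasureTheory.volume.restrict (Set.Ioc α 1)) (f := fun t => max (V P t g - q) 0)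
    (Filter.Eventually.of_forall fun t => le_max_right _ _) ?_
  · rw [hrepr]
  refine AEStronglyMeasurable.congr (f := fun t => max (Phi P g α t - q) 0)
    ((((Phi_measurable hC hα).sub measurable_const).max
      measurable_const).aestronglyMeasurable) ?_
  refine (MeasureTheory.ae_restrict_iff' measurableSet_Ioc).2
    (Filter.Eventually.of_forall fun t ht => ?_)
  show max (Phi P g α t - q) 0 = max (V P t g - q) 0
  rw [Phi_eq ht.1.le]

include hgm hα hα1 in
lemma core_le (q : ℝ) :
    ∫ t in α..1, V P t g ≤ (1 - α) * q + ∫ ω, max (g ω - q) 0 ∂P := by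
  have h1 : (∫ t in α..1, V P t g) - (1-α) * q = ∫ t in α..1, (V P t g - q) := by
    rw [intervalIntegral.integral_sub (V_intervalIntegrable hC hα hα1.le)
      intervalIntegrable_const, intervalIntegral.integral_const, smul_eq_mul]
  have h2 : ∫ t in α..1, (V P t g - q) ≤ ∫ t in α..1, max (V P t g - q) 0 :=
    intervalIntegral.integral_mono_on hα1.le
      ((V_intervalIntegrable hC hα hα1.le).sub intervalIntegrable_const)
      (maxV_intervalIntegrable hC hα hα1.le q) (fun t _ => le_max_left _ _)
  have h3 : ∫ t in α..1, max (V P t g - q) 0 ≤ ∫ ω, max (g ω - q) 0 ∂P := by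
    rw [intervalIntegral_max_eq hC hα hα1, key_fubini hC hgm hα hα1,
      expectation_posPart hC hgm]
    exact ENNReal.toReal_mono (lint_S_lt_top hC q).ne
      (lintegral_mono fun x => min_le_left _ _)
  linarith

include hgm hα hα1 in
lemma core_eq :
    ∫ t in α..1, V P t g
      = (1 - α) * V P α g + ∫ ω, max (g ω - V P α g) 0 ∂P := by
  set q := V P α g with hq
  have h1 : (∫ t in α..1, V P t g) - (1-α) * q = ∫ t in α..1, (V P t g - q) := by
    rw [intervalIntegral.integral_sub (V_intervalIntegrable hC hα hα1.le)
      intervalIntegrable_const, intervalIntegral.integral_const, smul_eq_mul]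
  have h2 : ∫ t in α..1, (V P t g - q) = ∫ t in α..1, max (V P t g - q) 0 := by
    refine intervalIntegral.integral_congr fun t ht => ?_
    rw [Set.uIcc_of_le hα1.le] at ht
    rw [max_eq_left (sub_nonneg.2 (V_mono_t hC hα ht.1))]
  have h3 : ∫ t in α..1, max (V P t g - q) 0 = ∫ ω, max (g ω - q) 0 ∂P := by
    rw [intervalIntegral_max_eq hC hα hα1, key_fubini hC hgm hα hα1,
      expectation_posPart hC hgm]
    congr 1
    refine setLIntegral_congr_fun measurableSet_Ioi
      (fun x hx => ?_)
    refine min_eq_left ((S_anti (le_of_lt hx)).trans (V_mem hC hα))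
  linarith

end fubini

end bound

section sierpinski

variable (hP : ∀ A : Set Ω, MeasurableSet A → 0 < P A →
    ∃ B : Set Ω, MeasurableSet B ∧ B ⊆ A ∧ 0 < P B ∧ P B < P A)

include hP

lemma atomless_halving {s : Set Ω} (hs : MeasurableSet s) (h0 : 0 < P s) :
    ∃ t, MeasurableSet t ∧ t ⊆ s ∧ 0 < P t ∧ P t ≤ P s / 2 := by
  obtain ⟨B, hBm, hBs, hB0, hBlt⟩ := hP s hs h0
  rcases le_total (P B) (P s / 2) with h | h
  · exact ⟨B, hBm, hBs, hB0, h⟩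
  · have hdiff : P (s \ B) = P s - P B :=
      measure_diff hBs hBm.nullMeasurableSet (measure_ne_top P B)
    refine ⟨s \ B, hs.diff hBm, Set.diff_subset, ?_, ?_⟩
    · rw [hdiff]
      exact tsub_pos_iff_lt.2 hBlt
    · rw [hdiff]
      refine tsub_le_iff_right.2 ?_
      calc P s = P s / 2 + P s / 2 := (ENNReal.add_halves _).symm
        _ ≤ P s / 2 + P B := add_le_add_right h _

lemma atomless_small {s : Set Ω} (hs : MeasurableSet s) (h0 : 0 < P s)
    {ε : ℝ≥0∞} (hε : 0 < ε) :
    ∃ t, MeasurableSet t ∧ t ⊆ s ∧ 0 < P t ∧ P t ≤ ε := by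
  have key : ∀ n : ℕ, ∃ t, MeasurableSet t ∧ t ⊆ s ∧ 0 < P t ∧ P t ≤ P s * 2⁻¹ ^ n := by
    intro n
    induction n with
    | zero => exact ⟨s, hs, subset_rfl, h0, by simp⟩
    | succ n ih =>
      obtain ⟨t, htm, hts, ht0, htle⟩ := ih
      obtain ⟨t', ht'm, ht't, ht'0, ht'le⟩ := atomless_halving hP htm ht0
      refine ⟨t', ht'm, ht't.trans hts, ht'0, ?_⟩
      calc P t' ≤ P t / 2 := ht'le
        _ = P t * 2⁻¹ := by rw [div_eq_mul_inv]
        _ ≤ (P s * 2⁻¹ ^ n) * 2⁻¹ := mul_le_mul_left htle _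
        _ = P s * 2⁻¹ ^ (n + 1) := by rw [pow_succ, mul_assoc]
  rcases le_total (P s) ε with h | h
  · exact ⟨s, hs, subset_rfl, h0, h⟩
  · have hPs0 : P s ≠ 0 := h0.ne'
    have hPst : P s ≠ ⊤ := measure_ne_top P s
    have hδ : ε / P s ≠ 0 := by
      rw [ne_eq, ENNReal.div_eq_zero_iff]
      push_neg
      exact ⟨hε.ne', hPst⟩
    obtain ⟨n, hn⟩ := ENNReal.exists_inv_two_pow_lt hδ
    obtain ⟨t, htm, hts, ht0, htle⟩ := key n
    refine ⟨t, htm, hts, ht0, htle.trans ?_⟩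
    calc P s * 2⁻¹ ^ n ≤ P s * (ε / P s) := mul_le_mul_right hn.le _
      _ = ε := ENNReal.mul_div_cancel hPs0 hPst

lemma exists_subset_measure_eq {s : Set Ω} (hs : MeasurableSet s) {r : ℝ≥0∞}
    (hr : r ≤ P s) : ∃ t, MeasurableSet t ∧ t ⊆ s ∧ P t = r := by
  classical
  set m : Set Ω → ℝ≥0∞ := fun u =>
    sSup {p | ∃ t, MeasurableSet t ∧ t ⊆ s \ u ∧ P t = p ∧ P u + P t ≤ r} with hm
  have hm_le : ∀ u : Set Ω, P u ≤ r → m u ≤ r := by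
    intro u _
    refine sSup_le fun p hp => ?_
    obtain ⟨t, _, _, hpt, hle⟩ := hp
    exact hpt ▸ le_trans (le_add_self.trans hle) le_rfl
  have hm_mem : ∀ (u t : Set Ω), MeasurableSet t → t ⊆ s \ u → P u + P t ≤ r →
      P t ≤ m u := by
    intro u t htm hts hle
    exact le_sSup ⟨t, htm, hts, rfl, hle⟩
  have hstep : ∀ u : {u : Set Ω // MeasurableSet u ∧ u ⊆ s ∧ P u ≤ r},
      ∃ v : {u : Set Ω // MeasurableSet u ∧ u ⊆ s ∧ P u ≤ r},
        u.1 ⊆ v.1 ∧ P u.1 + m u.1 / 2 ≤ P v.1 := by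
    rintro ⟨u, hum, hus, hur⟩
    by_cases h0 : m u = 0
    · exact ⟨⟨u, hum, hus, hur⟩, subset_rfl, by simp [h0]⟩
    · have hmr : m u ≤ r := hm_le u hur
      have hmt : m u ≠ ⊤ := (hmr.trans_lt (lt_of_le_of_lt hr (measure_lt_top P s))).ne
      have hhalf : m u / 2 < m u := ENNReal.half_lt_self h0 hmt
      obtain ⟨p, hp, hp2⟩ := lt_sSup_iff.1 hhalf
      obtain ⟨t, htm, hts, hpt, hle⟩ := hp
      have hdisj : Disjoint u t :=
        Set.disjoint_of_subset_right hts Set.disjoint_sdiff_right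
      have hPadd : P (u ∪ t) = P u + P t := measure_union hdisj htm
      refine ⟨⟨u ∪ t, hum.union htm, Set.union_subset hus
        (hts.trans Set.diff_subset), by rw [hPadd]; exact hle⟩, Set.subset_union_left, ?_⟩
      rw [hPadd]
      exact add_le_add_right (by rw [← hpt] at hp2; exact hp2.le) _
  choose F hF1 hF2 using hstep
  set U : ℕ → {u : Set Ω // MeasurableSet u ∧ u ⊆ s ∧ P u ≤ r} :=
    fun n => F^[n] ⟨∅, MeasurableSet.empty, Set.empty_subset s, by simp⟩ with hU
  have hUsucc : ∀ n, U (n + 1) = F (U n) := by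
    intro n
    rw [hU]
    exact Function.iterate_succ_apply' F n _
  have hUmono : Monotone fun n => (U n).1 := by
    refine monotone_nat_of_le_succ fun n => ?_
    rw [hUsucc n]
    exact hF1 (U n)
  set final : Set Ω := ⋃ n, (U n).1 with hfinal
  have hfm : MeasurableSet final := MeasurableSet.iUnion fun n => (U n).2.1
  have hfs : final ⊆ s := Set.iUnion_subset fun n => (U n).2.2.1
  have hPfinal : P final = ⨆ n, P (U n).1 := hUmono.measure_iUnion
  have hfle : P final ≤ r := by
    rw [hPfinal]
    exact iSup_le fun n => (U n).2.2.2
  refine ⟨final, hfm, hfs, le_antisymm hfle (not_lt.1 fun hlt => ?_)⟩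
  -- derive a contradiction from `P final < r`
  have hgap : 0 < P (s \ final) := by
    have hdiff : P (s \ final) = P s - P final :=
      measure_diff hfs hfm.nullMeasurableSet (measure_ne_top P final)
    rw [hdiff]
    exact tsub_pos_iff_lt.2 (lt_of_lt_of_le hlt hr)
  obtain ⟨t, htm, hts, ht0, htle⟩ := atomless_small hP (hs.diff hfm) hgap
    (tsub_pos_iff_lt.2 hlt)
  have htr : P final + P t ≤ r := by
    calc P final + P t ≤ P final + (r - P final) := add_le_add_right htle _
      _ = r := add_tsub_cancel_of_le hfle
  have hkey : ∀ n, P t ≤ m (U n).1 := by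
    intro n
    refine hm_mem (U n).1 t htm ?_ ?_
    · refine hts.trans (Set.diff_subset_diff_right ?_)
      exact Set.subset_iUnion (fun k => (U k).1) n
    · exact le_trans (add_le_add_left (measure_mono
        (Set.subset_iUnion (fun k => (U k).1) n)) _) htr
  have hx0 : P t / 2 ≠ 0 := (ENNReal.half_pos ht0.ne').ne'
  have hxt : P t / 2 ≠ ⊤ := (ENNReal.div_lt_top (measure_ne_top P t) (by norm_num)).ne
  have hgrow : ∀ n : ℕ, (n : ℝ≥0∞) * (P t / 2) ≤ P (U n).1 := by
    intro n
    induction n with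
    | zero => simp
    | succ n ih =>
      have h1 : P (U n).1 + m (U n).1 / 2 ≤ P (U (n + 1)).1 := by
        rw [hUsucc n]
        exact hF2 (U n)
      have h2 : P t / 2 ≤ m (U n).1 / 2 := by gcongr; exact hkey n
      calc ((n + 1 : ℕ) : ℝ≥0∞) * (P t / 2) = (n : ℝ≥0∞) * (P t / 2) + P t / 2 := by
            push_cast
            rw [add_mul, one_mul]
        _ ≤ P (U n).1 + m (U n).1 / 2 := add_le_add ih h2
        _ ≤ P (U (n + 1)).1 := h1
  have hrt : r / (P t / 2) < ⊤ :=
    ENNReal.div_lt_top (lt_of_le_of_lt hr (measure_lt_top P s)).ne hx0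
  obtain ⟨n, hn⟩ := ENNReal.exists_nat_gt hrt.ne
  have : (n : ℝ≥0∞) * (P t / 2) ≤ r := (hgrow n).trans ((U n).2.2.2)
  have : (n : ℝ≥0∞) ≤ r / (P t / 2) := (ENNReal.le_div_iff_mul_le (Or.inl hx0) (Or.inl hxt)).2 this
  exact absurd hn (not_lt.2 this)

end sierpinski


section ssd

lemma uq_monotone (q : ℝ) : Monotone (fun z : ℝ => min (z + q) 0) :=
  fun a b hab => min_le_min (by linarith) le_rfl

lemma uq_concave (q : ℝ) : ConcaveOn ℝ Set.univ (fun z : ℝ => min (z + q) 0) := by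
  refine ⟨convex_univ, fun x _ y _ a b ha hb hab => ?_⟩
  simp only [smul_eq_mul]
  refine le_min ?_ ?_
  · have h1 : a * min (x + q) 0 ≤ a * (x + q) := mul_le_mul_of_nonneg_left (min_le_left _ _) ha
    have h2 : b * min (y + q) 0 ≤ b * (y + q) := mul_le_mul_of_nonneg_left (min_le_left _ _) hb
    have h3 : a * (x + q) + b * (y + q) = a * x + b * y + (a + b) * q := by ring
    rw [hab, one_mul] at h3
    linarith
  · have h1 : a * min (x + q) 0 ≤ 0 := mul_nonpos_of_nonneg_of_nonpos ha (min_le_right _ _)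
    have h2 : b * min (y + q) 0 ≤ 0 := mul_nonpos_of_nonneg_of_nonpos hb (min_le_right _ _)
    linarith

omit [IsProbabilityMeasure P] in
lemma min_neg_integral (g : Ω → ℝ) (q : ℝ) :
    ∫ ω, min (-(g ω) + q) 0 ∂P = -∫ ω, max (g ω - q) 0 ∂P := by
  have h : ∀ ω, min (-(g ω) + q) 0 = -(max (g ω - q) 0) := by
    intro ω
    rcases le_total (g ω) q with h | h
    · rw [min_eq_right (by linarith), max_eq_right (by linarith), neg_zero]
    · rw [min_eq_left (by linarith), max_eq_left (by linarith)]; ring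
  simp_rw [h]
  exact integral_neg _

/-- stop-loss order from SSD dominance -/
lemma stoploss_of_ssd {f g : Ω → ℝ}
    (hssd : ∀ u : ℝ → ℝ, Monotone u → ConcaveOn ℝ Set.univ u →
      ∫ ω, u (-(g ω)) ∂P ≤ ∫ ω, u (-(f ω)) ∂P) (q : ℝ) :
    ∫ ω, max (f ω - q) 0 ∂P ≤ ∫ ω, max (g ω - q) 0 ∂P := by
  have h := hssd (fun z => min (z + q) 0) (uq_monotone q) (uq_concave q)
  rw [min_neg_integral, min_neg_integral] at h
  linarith

variable {g : Ω → ℝ} {C : ℝ} (hC : ∀ᵐ ω ∂P, |g ω| ≤ C)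

include hC in
lemma integrable_u_comp_neg {u : ℝ → ℝ} (hu : Monotone u) (hgm : Measurable g) :
    Integrable (fun ω => u (-(g ω))) P := by
  refine (memLp_top_of_bound (hu.measurable.comp hgm.neg).aestronglyMeasurable
    (max |u C| |u (-C)|) ?_).integrable le_top
  filter_upwards [hC] with ω hω
  rw [Real.norm_eq_abs, abs_le]
  rw [abs_le] at hω
  constructor
  · calc -(max |u C| |u (-C)|) ≤ -|u (-C)| := neg_le_neg (le_max_right _ _)
      _ ≤ u (-C) := neg_abs_le _
      _ ≤ u (-(g ω)) := hu (by linarith)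
  · calc u (-(g ω)) ≤ u C := hu (by linarith)
      _ ≤ |u C| := le_abs_self _
      _ ≤ max |u C| |u (-C)| := le_max_left _ _

include hC in
lemma integrable_of_bound (hgm : Measurable g) : Integrable g P := by
  refine (memLp_top_of_bound hgm.aestronglyMeasurable C ?_).integrable le_top
  filter_upwards [hC] with ω hω
  rwa [Real.norm_eq_abs]

include hC in
lemma jensen_piece {B : Set Ω} (hB : MeasurableSet B) (hB0 : P B ≠ 0)
    {u : ℝ → ℝ} (hu : Monotone u) (huc : ConcaveOn ℝ Set.univ u) (hgm : Measurable g) :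
    ∫ ω in B, u (-(g ω)) ∂P
      ≤ (P B).toReal * u (-((P B).toReal⁻¹ * ∫ ω in B, g ω ∂P)) := by
  haveI : NeZero (P.restrict B) := ⟨by
    simp only [ne_eq, Measure.restrict_eq_zero]
    exact hB0⟩
  have havg := huc.le_map_average (μ := P.restrict B) (f := fun ω => -(g ω))
    (huc.continuousOn isOpen_univ) isClosed_univ
    (Filter.Eventually.of_forall fun ω => Set.mem_univ _)
    (((integrable_of_bound hC hgm).restrict (s := B)).neg)
    ((integrable_u_comp_neg hC hu hgm).restrict (s := B))
  rw [average_eq, average_eq] at havg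
  simp only [measureReal_def, Measure.restrict_apply_univ, smul_eq_mul] at havg
  have hPBtoReal : (0:ℝ) < (P B).toReal :=
    ENNReal.toReal_pos hB0 (measure_ne_top P B)
  have h2 := mul_le_mul_of_nonneg_left havg hPBtoReal.le
  rw [← mul_assoc, mul_inv_cancel₀ hPBtoReal.ne', one_mul] at h2
  refine h2.trans_eq ?_
  congr 2
  rw [integral_neg]
  ring

end ssd

section bridge

lemma Lp_bound (X : Lp ℝ ⊤ P) : ∃ C : ℝ, 0 ≤ C ∧ ∀ᵐ ω ∂P, |X ω| ≤ C := by
  refine ⟨(eLpNormEssSup (⇑X) P).toReal, ENNReal.toReal_nonneg, ?_⟩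
  have h1 : eLpNormEssSup (⇑X) P ≠ ⊤ := by
    have h2 := (Lp.memLp X).2
    rw [eLpNorm_exponent_top] at h2
    exact h2.ne
  filter_upwards [ae_le_eLpNormEssSup (f := ⇑X) (μ := P)] with ω hω
  calc |X ω| = ((‖X ω‖₊ : ℝ≥0∞)).toReal := by
        simp [← Real.norm_eq_abs]
    _ ≤ (eLpNormEssSup (⇑X) P).toReal := ENNReal.toReal_mono h1 hω

end bridge

section partb

lemma part_b_main
    (hP : ∀ A : Set Ω, MeasurableSet A → 0 < P A →
      ∃ B : Set Ω, MeasurableSet B ∧ B ⊆ A ∧ 0 < P B ∧ P B < P A)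
    {α : ℝ} (hα0 : 0 < α) (hα1 : α < 1) (ρ : Lp ℝ ⊤ P → ℝ)
    (hρssd : ∀ X Y : Lp ℝ ⊤ P, (∀ u : ℝ → ℝ, Monotone u → ConcaveOn ℝ Set.univ u →
      ∫ ω, u (-(Y ω)) ∂P ≤ ∫ ω, u (-(X ω)) ∂P) → ρ X ≤ ρ Y)
    (hρVaR : ∀ X : Lp ℝ ⊤ P, V P α ⇑X ≤ ρ X) (X : Lp ℝ ⊤ P) :
    (1 - α)⁻¹ * ∫ t in α..1, V P t ⇑X ≤ ρ X := by
  classical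
  obtain ⟨C, hC0, hC⟩ := Lp_bound X
  have hgm : Measurable (⇑X : Ω → ℝ) := (Lp.stronglyMeasurable X).measurable
  have h1a : (0:ℝ) < 1 - α := by linarith
  refine le_of_forall_pos_le_add fun ε hε => ?_
  set δ := min (α/2) ((1-α)*ε/(2*C+1)) with hδdef
  have hδ0 : 0 < δ := lt_min (by linarith) (by positivity)
  have hδα : δ < α := (min_le_left _ _).trans_lt (by linarith)
  have hδ2 : δ * (2*C+1) ≤ ε * (1-α) := by
    have h := min_le_right (α/2) ((1-α)*ε/(2*C+1))
    rw [← hδdef, le_div_iff₀ (by positivity)] at h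
    linarith
  set g : Ω → ℝ := (⇑X : Ω → ℝ) with hgdef
  set q := V P α g with hqdef
  have hT0m : MeasurableSet {ω | q < g ω} := measurableSet_lt measurable_const hgm
  have hT1m : MeasurableSet {ω | q ≤ g ω} := measurableSet_le measurable_const hgm
  have hT0 : P {ω | q < g ω} ≤ ENNReal.ofReal (1 - α) := V_mem hC hα0
  have hT1 : ENNReal.ofReal (1 - α) ≤ P {ω | q ≤ g ω} := by
    have hiter : {ω | q ≤ g ω} = ⋂ n : ℕ, {ω | q - 1/(n+1) < g ω} := by
      ext ω
      simp only [Set.mem_setOf_eq, Set.mem_iInter]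
      constructor
      · intro h n
        have hpos : (0:ℝ) < 1/((n:ℝ)+1) := by positivity
        linarith
      · intro h
        by_contra hlt
        push_neg at hlt
        obtain ⟨n, hn⟩ := exists_nat_one_div_lt (sub_pos.2 hlt)
        have h2 := h n
        have : (1:ℝ)/((n:ℝ)+1) < q - g ω := by exact_mod_cast hn
        linarith
    rw [hiter, Antitone.measure_iInter]
    · refine le_iInf fun n => ?_
      have hx : q - 1/((n:ℝ)+1) < q := sub_lt_self q (by positivity)
      exact ((lt_V_iff hC hα0).1 hx).le
    · intro m n hmn ω hω
      simp only [Set.mem_setOf_eq] at hω ⊢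
      have h1 : (1:ℝ)/((n:ℝ)+1) ≤ 1/((m:ℝ)+1) := by
        apply one_div_le_one_div_of_le (by positivity)
        have := (Nat.cast_le (α := ℝ)).2 hmn
        linarith
      linarith
    · exact fun n => (measurableSet_lt measurable_const hgm).nullMeasurableSet
    · exact ⟨0, measure_ne_top P _⟩
  have hT01 : {ω | q < g ω} ⊆ {ω | q ≤ g ω} := fun ω h => by
    simp only [Set.mem_setOf_eq] at h ⊢
    exact le_of_lt h
  have hr1 : ENNReal.ofReal (1-α) - P {ω | q < g ω}
      ≤ P ({ω | q ≤ g ω} \ {ω | q < g ω}) := by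
    rw [measure_diff hT01 hT0m.nullMeasurableSet (measure_ne_top _ _)]
    exact tsub_le_tsub hT1 le_rfl
  obtain ⟨D, hDm, hDsub, hD⟩ := exists_subset_measure_eq hP (hT1m.diff hT0m) hr1
  set A := {ω | q < g ω} ∪ D with hAdef
  have hAm : MeasurableSet A := hT0m.union hDm
  have hdisj : Disjoint {ω | q < g ω} D :=
    Set.disjoint_of_subset_right hDsub Set.disjoint_sdiff_right
  have hPA : P A = ENNReal.ofReal (1 - α) := by
    rw [hAdef, measure_union hdisj hDm, hD, add_tsub_cancel_of_le hT0]
  have hPAtoReal : (P A).toReal = 1 - α := by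
    rw [hPA, ENNReal.toReal_ofReal h1a.le]
  have hAT1 : A ⊆ {ω | q ≤ g ω} :=
    Set.union_subset hT01 (hDsub.trans Set.diff_subset)
  have hAc : ENNReal.ofReal δ ≤ P Aᶜ := by
    rw [measure_compl hAm (measure_ne_top _ _), measure_univ, hPA,
      show (1:ℝ≥0∞) = ENNReal.ofReal 1 from ENNReal.ofReal_one.symm,
      ← ENNReal.ofReal_sub _ (by linarith)]
    exact ENNReal.ofReal_le_ofReal (by linarith)
  obtain ⟨D', hD'm, hD'sub, hD'⟩ := exists_subset_measure_eq hP hAm.compl hAc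
  set B := A ∪ D' with hBdef
  have hBm : MeasurableSet B := hAm.union hD'm
  have hdisj2 : Disjoint A D' :=
    Set.disjoint_of_subset_right hD'sub disjoint_compl_right
  have hPB : P B = ENNReal.ofReal (1 - α + δ) := by
    rw [hBdef, measure_union hdisj2 hD'm, hPA, hD',
      ← ENNReal.ofReal_add (by linarith) hδ0.le]
  have hPBtoReal : (P B).toReal = 1 - α + δ := by
    rw [hPB, ENNReal.toReal_ofReal (by linarith)]
  have hPB0 : P B ≠ 0 := by
    rw [hPB, ne_eq, ENNReal.ofReal_eq_zero, not_le]
    linarith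
  have hgint : Integrable g P := integrable_of_bound hC hgm
  set IA := ∫ ω in A, g ω ∂P with hIAdef
  set IB := ∫ ω in B, g ω ∂P with hIBdef
  have hIBsplit : IB = IA + ∫ ω in D', g ω ∂P := by
    rw [hIBdef, hBdef, setIntegral_union hdisj2 hD'm hgint.integrableOn hgint.integrableOn]
  have habsD' : |∫ ω in D', g ω ∂P| ≤ C * δ := by
    have hb := norm_setIntegral_le_of_norm_le_const_ae (μ := P) (s := D') (C := C) (f := g)
      (measure_lt_top P D')
      (ae_restrict_of_ae (hC.mono fun ω h => by rwa [Real.norm_eq_abs]))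
    have hδ' : (P D').toReal = δ := by rw [hD', ENNReal.toReal_ofReal hδ0.le]
    rwa [Real.norm_eq_abs, measureReal_def, hδ'] at hb
  have habsA : |IA| ≤ C * (1 - α) := by
    have hb := norm_setIntegral_le_of_norm_le_const_ae (μ := P) (s := A) (C := C) (f := g)
      (measure_lt_top P A)
      (ae_restrict_of_ae (hC.mono fun ω h => by rwa [Real.norm_eq_abs]))
    rwa [Real.norm_eq_abs, measureReal_def, hPAtoReal] at hb
  have hmaxsplit : ∫ ω, max (g ω - q) 0 ∂P = ∫ ω in A, (g ω - q) ∂P := by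
    have h1 : ∫ ω in A, max (g ω - q) 0 ∂P = ∫ ω, max (g ω - q) 0 ∂P := by
      refine setIntegral_eq_integral_of_forall_compl_eq_zero fun ω hω => ?_
      have hω0 : ω ∉ {ω | q < g ω} := fun hmem => hω (Set.mem_union_left _ hmem)
      simp only [Set.mem_setOf_eq, not_lt] at hω0
      rw [max_eq_right (by linarith)]
    have h2 : ∫ ω in A, max (g ω - q) 0 ∂P = ∫ ω in A, (g ω - q) ∂P :=
      setIntegral_congr_fun hAm fun ω hω => max_eq_left (sub_nonneg.2 (hAT1 hω))
    rw [← h1, h2]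
  have hIAeq : IA = ∫ t in α..1, V P t g := by
    have hcore := core_eq hC hgm hα0 hα1
    have h3 : ∫ ω in A, (g ω - q) ∂P = IA - q * (1 - α) := by
      rw [integral_sub hgint.integrableOn
        (integrableOn_const (C := q) (measure_lt_top P A).ne),
        setIntegral_const, measureReal_def, hPAtoReal, smul_eq_mul, ← hIAdef]
      ring
    rw [hcore, ← hqdef, hmaxsplit, h3]
    ring
  set cB := (1 - α + δ)⁻¹ * IB with hcBdef
  set Y0 : Ω → ℝ := fun ω => if ω ∈ B then cB else g ω with hY0def
  have hY0m : Measurable Y0 := Measurable.ite hBm measurable_const hgm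
  have hY0bound : ∀ᵐ ω ∂P, |Y0 ω| ≤ max C |cB| := by
    filter_upwards [hC] with ω h
    simp only [hY0def]
    by_cases hω : ω ∈ B
    · rw [if_pos hω]
      exact le_max_right _ _
    · rw [if_neg hω]
      exact h.trans (le_max_left _ _)
  have hYmem : MemLp Y0 ⊤ P :=
    memLp_top_of_bound hY0m.aestronglyMeasurable _
      (hY0bound.mono fun ω h => by rwa [Real.norm_eq_abs])
  set Y := hYmem.toLp Y0 with hYdef
  have hYcoe : ⇑Y =ᵐ[P] Y0 := MemLp.coeFn_toLp _
  have hssd : ∀ u : ℝ → ℝ, Monotone u → ConcaveOn ℝ Set.univ u →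
      ∫ ω, u (-(X ω)) ∂P ≤ ∫ ω, u (-(Y ω)) ∂P := by
    intro u hu huc
    have hY0int : ∫ ω, u (-(Y ω)) ∂P = ∫ ω, u (-(Y0 ω)) ∂P :=
      integral_congr_ae (hYcoe.mono fun ω h => by
        show u (-(Y ω)) = u (-(Y0 ω))
        rw [h])
    rw [hY0int]
    have hui : Integrable (fun ω => u (-(g ω))) P := integrable_u_comp_neg hC hu hgm
    have huiY : Integrable (fun ω => u (-(Y0 ω))) P :=
      integrable_u_comp_neg hY0bound hu hY0m
    have hsplit1 : ∫ ω, u (-(g ω)) ∂P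
        = ∫ ω in B, u (-(g ω)) ∂P + ∫ ω in Bᶜ, u (-(g ω)) ∂P :=
      (integral_add_compl hBm hui).symm
    have hsplit2 : ∫ ω, u (-(Y0 ω)) ∂P
        = ∫ ω in B, u (-(Y0 ω)) ∂P + ∫ ω in Bᶜ, u (-(Y0 ω)) ∂P :=
      (integral_add_compl hBm huiY).symm
    have hBc : ∫ ω in Bᶜ, u (-(Y0 ω)) ∂P = ∫ ω in Bᶜ, u (-(g ω)) ∂P := by
      refine setIntegral_congr_fun hBm.compl fun ω hω => ?_
      simp only [hY0def]
      rw [if_neg (by exact hω : ω ∉ B)]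
    have hBin : ∫ ω in B, u (-(Y0 ω)) ∂P = (P B).toReal * u (-cB) := by
      have heq : ∀ ω ∈ B, u (-(Y0 ω)) = u (-cB) := by
        intro ω hω
        simp only [hY0def]
        rw [if_pos hω]
      rw [setIntegral_congr_fun hBm heq, setIntegral_const, smul_eq_mul, measureReal_def]
    have hjensen := jensen_piece hC hBm hPB0 hu huc hgm
    have hcBeq : (P B).toReal⁻¹ * ∫ ω in B, g ω ∂P = cB := by
      rw [hPBtoReal, hcBdef, hIBdef]
    rw [hcBeq] at hjensen
    rw [show ∫ ω, u (-(X ω)) ∂P = ∫ ω, u (-(g ω)) ∂P from rfl, hsplit1, hsplit2, hBc, hBin]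
    linarith [hjensen]
  have hρXY : ρ Y ≤ ρ X := hρssd Y X hssd
  have hVarY : cB ≤ V P α (⇑Y : Ω → ℝ) := by
    rw [V_congr hYcoe α]
    refine le_V_of_lb hY0bound fun a ha => ?_
    by_contra hlt
    push_neg at hlt
    have hBsub : B ⊆ {ω | a < Y0 ω} := by
      intro ω hω
      simp only [Set.mem_setOf_eq, hY0def]
      rw [if_pos hω]
      exact hlt
    have hSlb : ENNReal.ofReal (1 - α + δ) ≤ S P Y0 a := hPB ▸ measure_mono hBsub
    have hcontr : ENNReal.ofReal (1 - α + δ) ≤ ENNReal.ofReal (1 - α) := hSlb.trans ha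
    have := (ENNReal.ofReal_lt_ofReal_iff (by linarith)).2 (by linarith : (1:ℝ) - α < 1 - α + δ)
    exact absurd hcontr (not_le.2 this)
  have hchain : cB ≤ ρ X := le_trans (hVarY.trans (hρVaR Y)) hρXY
  have hIB_lb : IA - C * δ ≤ IB := by
    have := abs_le.1 habsD'
    rw [hIBsplit]
    linarith [this.1]
  have hcB_lb : (1-α+δ)⁻¹ * (IA - C*δ) ≤ cB := by
    rw [hcBdef]
    exact mul_le_mul_of_nonneg_left hIB_lb (inv_nonneg.2 (by linarith))
  have harith : (1-α)⁻¹ * IA ≤ (1-α+δ)⁻¹ * (IA - C*δ) + ε := by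
    have heq : (1-α)⁻¹ * IA - (1-α+δ)⁻¹ * (IA - C*δ)
        = (δ*(IA + (1-α)*C)) / ((1-α)*(1-α+δ)) := by
      field_simp
      ring
    have hIAub : IA ≤ C * (1-α) := (abs_le.1 habsA).2
    have hfrac : (δ*(IA + (1-α)*C)) / ((1-α)*(1-α+δ)) ≤ ε := by
      rw [div_le_iff₀ (by positivity)]
      nlinarith [mul_le_mul_of_nonneg_left hIAub hδ0.le, hδ2, hε.le, h1a, hδ0.le,
        mul_nonneg (mul_nonneg hε.le h1a.le) hδ0.le]
    linarith [heq, hfrac]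
  calc (1-α)⁻¹ * ∫ t in α..1, V P t g = (1-α)⁻¹ * IA := by rw [hIAeq]
    _ ≤ (1-α+δ)⁻¹ * (IA - C*δ) + ε := harith
    _ ≤ cB + ε := by linarith [hcB_lb]
    _ ≤ ρ X + ε := by linarith [hchain]

end partb

section es_bridge

lemma VaR_eq_V {t : ℝ} {g : Ω → ℝ} : VaR P t g = V P t g := rfl

lemma ES_eq_V {α : ℝ} (hα1 : α ≤ 1) (g : Ω → ℝ) :
    ES P α g = (1 - α)⁻¹ * ∫ t in α..1, V P t g := rfl

lemma ES_congr {α : ℝ} {g g' : Ω → ℝ} (h : g =ᵐ[P] g') : ES P α g = ES P α g' := by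
  unfold ES
  congr 1
  refine intervalIntegral.integral_congr fun t _ => ?_
  exact V_congr h t

end es_bridge

end ESAux


theorem ES_smallest_SSD_consistent_dominating_VaR
    [MeasurableSpace Ω] (P : Measure Ω) [IsProbabilityMeasure P]
    (hP : Atomless P) (α : ℝ) (hα : α ∈ Set.Ioo (0 : ℝ) 1) :
    -- (a) `ES_α` is an SSD-consistent risk measure dominating `VaR_α`
    (IsRiskMeasure P (fun X : Lp ℝ ⊤ P => ES P α X) ∧
      SSDConsistent P (fun X : Lp ℝ ⊤ P => ES P α X) ∧
      ∀ X : Lp ℝ ⊤ P, VaR P α X ≤ ES P α X) ∧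
    -- (b) it is the smallest such risk measure
    (∀ ρ : Lp ℝ ⊤ P → ℝ, IsRiskMeasure P ρ → SSDConsistent P ρ →
      (∀ X : Lp ℝ ⊤ P, VaR P α X ≤ ρ X) →
      ∀ X : Lp ℝ ⊤ P, ES P α X ≤ ρ X) := by
  classical
  obtain ⟨hα0, hα1⟩ := hα
  have h1a : (0:ℝ) < 1 - α := by linarith
  constructor
  · refine ⟨⟨?_, ?_, ?_⟩, ?_, ?_⟩
    · -- monotonicity
      intro X Y hYX
      obtain ⟨CX, _, hCX⟩ := ESAux.Lp_bound X
      obtain ⟨CY, _, hCY⟩ := ESAux.Lp_bound Y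
      have hle : (⇑Y : Ω → ℝ) ≤ᵐ[P] ⇑X := (MeasureTheory.Lp.coeFn_le Y X).2 hYX
      show ES P α ⇑Y ≤ ES P α ⇑X
      rw [ESAux.ES_eq_V hα1.le, ESAux.ES_eq_V hα1.le]
      refine mul_le_mul_of_nonneg_left ?_ (inv_nonneg.2 h1a.le)
      refine intervalIntegral.integral_mono_on hα1.le
        (ESAux.V_intervalIntegrable hCY hα0 hα1.le)
        (ESAux.V_intervalIntegrable hCX hα0 hα1.le) fun t ht => ?_
      exact ESAux.V_mono_g hCY hCX (lt_of_lt_of_le hα0 ht.1) hle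
    · -- cash invariance
      intro X m
      obtain ⟨CX, _, hCX⟩ := ESAux.Lp_bound X
      have hconst : ⇑(Lconst P m) =ᵐ[P] fun _ => m := (memLp_const m).coeFn_toLp
      have hcoe : ⇑(X - Lconst P m) =ᵐ[P] fun ω => X ω - m := by
        filter_upwards [MeasureTheory.Lp.coeFn_sub X (Lconst P m), hconst] with ω h1 h2
        rw [h1, Pi.sub_apply, h2]
      show ES P α ⇑(X - Lconst P m) = ES P α ⇑X - m
      rw [ESAux.ES_congr hcoe, ESAux.ES_eq_V hα1.le, ESAux.ES_eq_V hα1.le]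
      have hint : ∫ t in α..1, ESAux.V P t (fun ω => X ω - m)
          = ∫ t in α..1, (ESAux.V P t ⇑X - m) := by
        refine intervalIntegral.integral_congr fun t ht => ?_
        rw [Set.uIcc_of_le hα1.le] at ht
        exact ESAux.V_sub_const hCX (lt_of_lt_of_le hα0 ht.1) m
      rw [hint, intervalIntegral.integral_sub (ESAux.V_intervalIntegrable hCX hα0 hα1.le)
        intervalIntegrable_const, intervalIntegral.integral_const, smul_eq_mul]
      field_simp
    · -- normalization
      show ES P α ⇑(0 : Lp ℝ ⊤ P) = 0
      have hcoe : ⇑(0 : Lp ℝ ⊤ P) =ᵐ[P] (fun _ : Ω => (0:ℝ)) :=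
        MeasureTheory.Lp.coeFn_zero ℝ ⊤ P
      rw [ESAux.ES_congr hcoe, ESAux.ES_eq_V hα1.le]
      have h0b : ∀ᵐ ω ∂P, |(fun _ : Ω => (0:ℝ)) ω| ≤ (0:ℝ) :=
        Filter.Eventually.of_forall fun ω => by simp
      have hint : ∫ t in α..1, ESAux.V P t (fun _ : Ω => (0:ℝ)) = ∫ t in α..1, (0:ℝ) := by
        refine intervalIntegral.integral_congr fun t ht => ?_
        rw [Set.uIcc_of_le hα1.le] at ht
        have h1 := ESAux.V_le_C h0b t (lt_of_lt_of_le hα0 ht.1)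
        have h2 := ESAux.neg_C_le_V h0b t (lt_of_lt_of_le hα0 ht.1)
        have h3 : -(0:ℝ) ≤ ESAux.V P t (fun _ : Ω => (0:ℝ)) := h2
        show ESAux.V P t (fun _ : Ω => (0:ℝ)) = (0:ℝ)
        linarith
      rw [hint]
      simp
    · -- SSD consistency
      intro X Y hssd
      obtain ⟨CX, _, hCX⟩ := ESAux.Lp_bound X
      obtain ⟨CY, _, hCY⟩ := ESAux.Lp_bound Y
      show ES P α ⇑X ≤ ES P α ⇑Y
      rw [ESAux.ES_eq_V hα1.le, ESAux.ES_eq_V hα1.le]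
      refine mul_le_mul_of_nonneg_left ?_ (inv_nonneg.2 h1a.le)
      have hsl := ESAux.stoploss_of_ssd (f := ⇑X) (g := ⇑Y)
        (fun u hu huc => hssd u hu huc) (ESAux.V P α ⇑Y)
      have h1 := ESAux.core_le hCX (MeasureTheory.Lp.stronglyMeasurable X).measurable hα0 hα1
        (ESAux.V P α ⇑Y)
      have h2 := ESAux.core_eq hCY (MeasureTheory.Lp.stronglyMeasurable Y).measurable hα0 hα1
      linarith
    · -- VaR ≤ ES
      intro X
      obtain ⟨CX, _, hCX⟩ := ESAux.Lp_bound X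
      show VaR P α ⇑X ≤ ES P α ⇑X
      rw [ESAux.ES_eq_V hα1.le, ESAux.VaR_eq_V]
      exact ESAux.V_le_ES hCX hα0 hα1
  · -- minimality
    intro ρ _ hρssd hρVaR X
    show ES P α ⇑X ≤ ρ X
    rw [ESAux.ES_eq_V hα1.le]
    refine ESAux.part_b_main hP hα0 hα1 ρ (fun Xa Ya h => hρssd Xa Ya h) (fun Xa => ?_) X
    have := hρVaR Xa
    rwa [ESAux.VaR_eq_V] at this
end
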